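/- Let X and Y be infinite sets with |X| < |Y|. Then every universal sequence for the symmetric inverse monoid I(X) is also a universal sequence for I(Y). -/

import Mathlib

/-- The symmetric inverse monoid `I(X)`: partial bijections of `X` under
composition of partial functions. -/
instance pequivSemigroup (X : Type*) : Semigroup (PEquiv X X) where
  mul f g := f.trans g
  mul_assoc := PEquiv.trans_assoc

def IsUniversal (S : Type*) [Semigroup S] {A : Type*} (w : ℕ → FreeSemigroup A) : Prop :=
  ∀ s : ℕ → S, ∃ φ : FreeSemigroup A →ₙ* S, ∀ n, φ (w n) = s n

/-!
The orbits of the countably many partial bijections `s n` of `Y` (the classes of the equivalence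
relation they generate) are countable. Since `|X| < |Y|` and `X` is infinite, there are `|Y|`
orbits, so they can be grouped into `|Y|` blocks of `|X|` orbits each; a block then has exactly
`|X|` points, so `Y ≃ Y × X` with every `s n` preserving the blocks `{c} × X`. Each `s n` is thus a
family, indexed by `Y`, of partial bijections of `X`. Universality for `I(X)` realises each
coordinate family by a homomorphism, and putting the blocks back together is a homomorphism
`(Y → I(X)) → I(Y)`.
-/

universe u

open Cardinal Relation

namespace Relation

variable {α : Type*} {r : α → α → Prop}

theorem countable_setOf_reflTransGen (hr : ∀ a, {b | r a b}.Countable) (a : α) :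
    {b | ReflTransGen r a b}.Countable := by
  let step : Set α → Set α := fun S => ⋃ c ∈ S, {b | r c b}
  have hstep : ∀ m, (step^[m] {a}).Countable := by
    intro m
    induction m with
    | zero => exact Set.countable_singleton a
    | succ m ih =>
      rw [Function.iterate_succ_apply']
      exact ih.biUnion fun c _ => hr c
  refine (Set.countable_iUnion hstep).mono fun b hab => ?_
  induction hab with
  | refl => exact Set.mem_iUnion.2 ⟨0, rfl⟩
  | tail _ hcb ih =>
    obtain ⟨m, hm⟩ := Set.mem_iUnion.1 ih
    refine Set.mem_iUnion.2 ⟨m + 1, ?_⟩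
    rw [Function.iterate_succ_apply']
    exact Set.mem_biUnion hm hcb

theorem countable_setOf_eqvGen (hr : ∀ a, {b | r a b}.Countable)
    (hr' : ∀ b, {a | r a b}.Countable) (a : α) : {b | EqvGen r a b}.Countable := by
  rw [← EqvGen.reflTransGen_symmGen]
  exact countable_setOf_reflTransGen (fun c => (hr c).union (hr' c)) a

end Relation

namespace Cardinal

theorem mk_le_max_aleph0_of_countable_preimage {α β : Type u} (f : α → β)
    (hf : ∀ b, (f ⁻¹' {b}).Countable) : #α ≤ max #β ℵ₀ :=
  calc #α ≤ #β * ℵ₀ := mk_le_mk_mul_of_mk_preimage_le f fun b => (hf b).le_aleph0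
    _ ≤ max (max #β ℵ₀) ℵ₀ := mul_le_max _ _
    _ = max #β ℵ₀ := by rw [max_assoc, max_self]

end Cardinal

theorem exists_equiv_prod_of_mk_fiber_eq {Y ι X : Type u} (k : Y → ι)
    (hk : ∀ i, #{y // k y = i} = #X) : ∃ e : Y ≃ ι × X, ∀ y, (e y).1 = k y := by
  have g : ∀ i, {y // k y = i} ≃ X := fun i => (Cardinal.eq.1 (hk i)).some
  exact ⟨(Equiv.sigmaFiberEquiv k).symm.trans
    ((Equiv.sigmaCongrRight g).trans (Equiv.sigmaEquivProd ι X)), fun _ => rfl⟩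

theorem exists_equiv_prod_of_countable_classes {Y X : Type u} (r : Setoid Y)
    (hr : ∀ a, {b | r a b}.Countable) (hX : ℵ₀ ≤ #X) (hXY : #X < #Y) :
    ∃ e : Y ≃ Y × X, ∀ a b, r a b → (e a).1 = (e b).1 := by
  have hclass : ∀ q : Quotient r, (Quotient.mk r ⁻¹' {q}).Countable := by
    refine Quotient.ind fun a => (hr a).mono fun b hb => ?_
    exact Quotient.exact (Set.mem_singleton_iff.1 hb).symm
  have hQ : #(Quotient r) = #Y := by
    refine le_antisymm mk_quotient_le ?_
    have := mk_le_max_aleph0_of_countable_preimage _ hclass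
    exact (le_max_iff.1 this).resolve_right (hX.trans_lt hXY).not_ge
  obtain ⟨e₀⟩ : Nonempty (Quotient r ≃ Y × X) := by
    rw [← Cardinal.eq, mk_prod, lift_id, lift_id, hQ,
      Cardinal.mul_eq_left (hX.trans hXY.le) hXY.le (aleph0_pos.trans_le hX).ne']
  let k : Y → Y := fun y => (e₀ (Quotient.mk r y)).1
  suffices hk : ∀ c, #{y // k y = c} = #X by
    obtain ⟨e, he⟩ := exists_equiv_prod_of_mk_fiber_eq k hk
    refine ⟨e, fun a b hab => ?_⟩
    simp only [he, k, Quotient.sound hab]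
  intro c
  let f : {y // k y = c} → X := fun y => (e₀ (Quotient.mk r y)).2
  have hf : Function.Surjective f := fun x =>
    ⟨⟨(e₀.symm (c, x)).out, by simp [k]⟩, by simp [f]⟩
  refine le_antisymm ?_ (mk_le_of_surjective hf)
  calc #{y // k y = c} ≤ max #X ℵ₀ := mk_le_max_aleph0_of_countable_preimage f fun x => ?_
    _ = #X := max_eq_left hX
  refine ((hclass (e₀.symm (c, x))).preimage Subtype.val_injective).mono fun y hy => ?_
  simp only [Set.mem_preimage, Set.mem_singleton_iff, f] at hy ⊢
  exact e₀.eq_symm_apply.2 (Prod.ext y.2 hy)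

namespace IsUniversal

variable {S T : Type*} [Semigroup S] [Semigroup T] {A : Type*} {w : ℕ → FreeSemigroup A}

theorem pi (hw : IsUniversal S w) (ι : Type*) : IsUniversal (ι → S) w := by
  intro s
  choose φ hφ using fun i => hw fun n => s n i
  exact ⟨MulHom.pi φ, fun n => funext fun i => hφ i n⟩

theorem exists_of_forall_mem_range (hw : IsUniversal S w) (f : S →ₙ* T) {s : ℕ → T}
    (hs : ∀ n, s n ∈ Set.range f) : ∃ φ : FreeSemigroup A →ₙ* T, ∀ n, φ (w n) = s n := by
  choose t ht using hs
  obtain ⟨φ, hφ⟩ := hw t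
  exact ⟨f.comp φ, fun n => by simp [hφ, ht]⟩

end IsUniversal

namespace PEquiv

variable {α β ι X : Type*}

theorem mul_def (f g : PEquiv α α) : f * g = f.trans g := rfl

theorem toPEquiv_trans_symm (e : α ≃ β) :
    e.toPEquiv.trans e.symm.toPEquiv = PEquiv.refl α := by
  rw [← Equiv.toPEquiv_trans, Equiv.self_trans_symm, Equiv.toPEquiv_refl]

theorem symm_toPEquiv_trans (e : α ≃ β) : e.symm.toPEquiv.trans e.toPEquiv = PEquiv.refl β :=
  toPEquiv_trans_symm e.symm

def conjMulEquiv (e : α ≃ β) : PEquiv α α ≃* PEquiv β β where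
  toFun f := e.symm.toPEquiv.trans (f.trans e.toPEquiv)
  invFun f := e.toPEquiv.trans (f.trans e.symm.toPEquiv)
  left_inv f := by
    simp only [← trans_assoc, toPEquiv_trans_symm, refl_trans]
    simp only [trans_assoc, toPEquiv_trans_symm, trans_refl]
  right_inv f := by
    simp only [← trans_assoc, symm_toPEquiv_trans, refl_trans]
    simp only [trans_assoc, symm_toPEquiv_trans, trans_refl]
  map_mul' f g := by
    simp only [mul_def, trans_assoc]
    simp only [← trans_assoc e.toPEquiv, toPEquiv_trans_symm, refl_trans]

theorem conjMulEquiv_apply (e : α ≃ β) (f : PEquiv α α) (b : β) :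
    conjMulEquiv e f b = (f (e.symm b)).map e := by
  change (f (e.symm b)).bind (fun a => some (e a)) = _
  cases f (e.symm b) <;> rfl

def fiberwise (p : ι → PEquiv X X) : PEquiv (ι × X) (ι × X) where
  toFun a := (p a.1 a.2).map (Prod.mk a.1)
  invFun b := ((p b.1).symm b.2).map (Prod.mk b.1)
  inv := by
    rintro ⟨i, x⟩ ⟨j, y⟩
    simp only [Option.map_eq_some_iff, Prod.mk.injEq]
    constructor
    · rintro ⟨_, h, rfl, rfl⟩
      exact ⟨_, (p _).eq_some_iff.1 h, rfl, rfl⟩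
    · rintro ⟨_, h, rfl, rfl⟩
      exact ⟨_, (p _).eq_some_iff.2 h, rfl, rfl⟩

def fiberwiseHom : (ι → PEquiv X X) →ₙ* PEquiv (ι × X) (ι × X) where
  toFun := fiberwise
  map_mul' p q := by
    ext1 ⟨i, x⟩
    change ((p i x).bind (q i)).map (Prod.mk i) =
      ((p i x).map (Prod.mk i)).bind (fiberwise q)
    cases p i x <;> rfl

theorem map_snd_apply_eq_some_iff {f : PEquiv (ι × X) (ι × X)}
    (hf : ∀ a b, b ∈ f a → b.1 = a.1) (i : ι) (x y : X) :
    (f (i, x)).map Prod.snd = some y ↔ f (i, x) = some (i, y) := by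
  rw [Option.map_eq_some_iff]
  constructor
  · rintro ⟨b, hb, rfl⟩
    exact hb.trans (congrArg some (Prod.ext (hf (i, x) b hb) rfl))
  · exact fun h => ⟨_, h, rfl⟩

theorem mem_range_fiberwiseHom (f : PEquiv (ι × X) (ι × X)) (hf : ∀ a b, b ∈ f a → b.1 = a.1) :
    f ∈ Set.range (fiberwiseHom (ι := ι) (X := X)) := by
  have hf' : ∀ a b, b ∈ f.symm a → b.1 = a.1 := fun a b h =>
    (hf b a ((mem_iff_mem f).1 h)).symm
  refine ⟨fun i => ⟨fun x => (f (i, x)).map Prod.snd, fun y => (f.symm (i, y)).map Prod.snd,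
    fun x y => ?_⟩, ?_⟩
  · rw [map_snd_apply_eq_some_iff hf', map_snd_apply_eq_some_iff hf, eq_some_iff]
  · ext1 ⟨i, x⟩
    change (((f (i, x)).map Prod.snd).map (Prod.mk i)) = f (i, x)
    cases h : f (i, x) with
    | none => rfl
    | some b => exact congrArg some (Prod.ext (hf _ _ h).symm rfl)

theorem countable_setOf_exists_mem {κ : Type*} [Countable κ] (s : κ → PEquiv α β) (a : α) :
    {b | ∃ n, b ∈ s n a}.Countable := by
  rw [Set.ofPred_exists]
  exact Set.countable_iUnion fun n =>
    Set.Subsingleton.countable fun _ hb _ hc => Option.mem_unique hb hc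

theorem countable_setOf_eqvGen {κ : Type*} [Countable κ] (s : κ → PEquiv α α) (a : α) :
    {b | EqvGen (fun a b => ∃ n, b ∈ s n a) a b}.Countable := by
  refine Relation.countable_setOf_eqvGen (countable_setOf_exists_mem s) (fun b => ?_) a
  exact (countable_setOf_exists_mem (fun n => (s n).symm) b).mono
    fun _ ⟨n, h⟩ => Set.mem_ofPred.2 ⟨n, (mem_iff_mem (s n)).2 h⟩

theorem mem_range_conj_fiberwiseHom (e : α ≃ ι × X) (f : PEquiv α α)
    (hf : ∀ a b, b ∈ f a → (e b).1 = (e a).1) :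
    f ∈ Set.range ((conjMulEquiv e).symm.toMulHom.comp fiberwiseHom) := by
  obtain ⟨p, hp⟩ := mem_range_fiberwiseHom (conjMulEquiv e f) fun a b hab => by
    rw [Option.mem_def, conjMulEquiv_apply, Option.map_eq_some_iff] at hab
    obtain ⟨y, hy, rfl⟩ := hab
    simpa using hf _ _ hy
  exact ⟨p, by simp [hp]⟩

end PEquiv

theorem stmt5_general {X Y : Type u} {A : Type*} [Infinite X]
    (hXY : Cardinal.mk X < Cardinal.mk Y)
    (w : ℕ → FreeSemigroup A) (hw : IsUniversal (PEquiv X X) w) :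
    IsUniversal (PEquiv Y Y) w := by
  intro s
  obtain ⟨e, he⟩ := exists_equiv_prod_of_countable_classes
    (EqvGen.setoid fun a b => ∃ n, b ∈ s n a) (PEquiv.countable_setOf_eqvGen s)
    (aleph0_le_mk X) hXY
  exact (hw.pi Y).exists_of_forall_mem_range _ fun n =>
    PEquiv.mem_range_conj_fiberwiseHom e (s n) fun a b hab => (he a b (.rel _ _ ⟨n, hab⟩)).symm

/-- If `X` and `Y` are infinite with `|X| < |Y|`, every universal sequence for the
symmetric inverse monoid `I(X)` is universal for `I(Y)`. -/
theorem stmt5 {X Y : Type u} {A : Type*} [Infinite X] [Infinite Y] [Countable A]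
    (hXY : Cardinal.mk X < Cardinal.mk Y)
    (w : ℕ → FreeSemigroup A) (hw : IsUniversal (PEquiv X X) w) :
    IsUniversal (PEquiv Y Y) w :=
  stmt5_general hXY w hw
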